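/- arXiv:2106.15234 — 4 statements merged into one kernel-verified Lean document; each statement's English description precedes it below -/
import Mathlib

section
/- The graph S produced by the naive greedy spanner algorithm on a finite point set V in a metric space with stretch parameter t > 1 is a t-spanner of the complete graph on V: for every pair of points P, Q ∈ V, the shortest-path distance in S between P and Q is at most t times the metric distance between P and Q. -/
open Classical

noncomputable section

/-- The length of a path given as a list of points: the sum of the metric
distances of consecutive points. -/
def chainLength {X : Type*} [PseudoMetricSpace X] : List X → ℝ
  | [] => 0
  | [_] => 0
  | a :: b :: rest => dist a b + chainLength (b :: rest)

/-- `p` is a path from `u` to `v` using only (undirected) edges from `E`. -/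
def IsPathIn {X : Type*} (E : Set (X × X)) (p : List X) (u v : X) : Prop :=
  p ≠ [] ∧ p.head? = some u ∧ p.getLast? = some v ∧
    p.Chain' (fun a b => (a, b) ∈ E ∨ (b, a) ∈ E)

/-- One step of the naive greedy spanner algorithm: add the pair `e` as an edge
unless a path of length at most `t · dist e.1 e.2` already exists. -/
def greedyStep {X : Type*} [PseudoMetricSpace X] (t : ℝ)
    (S : Finset (X × X)) (e : X × X) : Finset (X × X) :=
  if ∃ p : List X, IsPathIn (↑S) p e.1 e.2 ∧ chainLength p ≤ t * dist e.1 e.2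
  then S else insert e S

/-- The naive greedy spanner algorithm run over a list of pairs. -/
def naiveGreedy {X : Type*} [PseudoMetricSpace X] (t : ℝ) (l : List (X × X)) :
    Finset (X × X) :=
  l.foldl (greedyStep t) ∅

/-!
When a pair is processed, either it is already joined by a path of length at most `t` times its
distance, or it becomes an edge, which is such a path because `t ≥ 1`. Later steps only add edges,
so that path survives to the output.
-/

section Paths

variable {X : Type*}

lemma IsPathIn.mono {E E' : Set (X × X)} (h : E ⊆ E') {p : List X} {u v : X}
    (hp : IsPathIn E p u v) : IsPathIn E' p u v := by
  obtain ⟨hne, hhead, hlast, hchain⟩ := hp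
  exact ⟨hne, hhead, hlast, hchain.imp fun _ _ hab => hab.imp (@h _) (@h _)⟩

lemma IsPathIn.reverse {E : Set (X × X)} {p : List X} {u v : X}
    (hp : IsPathIn E p u v) : IsPathIn E p.reverse v u := by
  obtain ⟨hne, hhead, hlast, hchain⟩ := hp
  refine ⟨by simpa using hne, by simpa using hlast, by simpa using hhead, ?_⟩
  exact List.isChain_reverse.mpr (hchain.imp fun _ _ hab => hab.symm)

variable [PseudoMetricSpace X]

lemma chainLength_append_cons :
    ∀ (p : List X) (a : X) (q : List X),
      chainLength (p ++ a :: q) = chainLength (p ++ [a]) + chainLength (a :: q)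
  | [], _, _ => by simp [chainLength]
  | [_], _, _ => by simp [chainLength]
  | x :: y :: p, a, q => by
    have ih := chainLength_append_cons (y :: p) a q
    simp only [List.cons_append] at ih ⊢
    rw [chainLength, chainLength, ih]
    ring

lemma chainLength_reverse : ∀ p : List X, chainLength p.reverse = chainLength p
  | [] => rfl
  | [_] => rfl
  | a :: b :: p => by
    rw [List.reverse_cons, List.reverse_cons, List.append_assoc, List.singleton_append,
      chainLength_append_cons, ← List.reverse_cons, chainLength_reverse (b :: p)]
    simp only [chainLength, dist_comm b a]
    ring

/-- The condition tested by `greedyStep`. -/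
def Spans (t : ℝ) (E : Set (X × X)) (u v : X) : Prop :=
  ∃ p : List X, IsPathIn E p u v ∧ chainLength p ≤ t * dist u v

variable {t : ℝ} {E E' : Set (X × X)} {u v : X}

lemma Spans.mono (h : E ⊆ E') (hs : Spans t E u v) : Spans t E' u v :=
  let ⟨p, hp, hlen⟩ := hs
  ⟨p, hp.mono h, hlen⟩

lemma Spans.symm (hs : Spans t E u v) : Spans t E v u :=
  let ⟨p, hp, hlen⟩ := hs
  ⟨p.reverse, hp.reverse, by rwa [chainLength_reverse, dist_comm]⟩

lemma spans_self (t : ℝ) (E : Set (X × X)) (u : X) : Spans t E u u :=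
  ⟨[u], ⟨List.cons_ne_nil _ _, rfl, rfl, List.isChain_singleton _⟩, by simp [chainLength]⟩

lemma spans_of_mem (ht : 1 ≤ t) (huv : (u, v) ∈ E) : Spans t E u v := by
  refine ⟨[u, v], ⟨List.cons_ne_nil _ _, rfl, rfl, ?_⟩, ?_⟩
  · exact List.isChain_pair.mpr (Or.inl huv)
  · simpa [chainLength] using le_mul_of_one_le_left dist_nonneg ht

end Paths

section Greedy

variable {X : Type*} [PseudoMetricSpace X] {t : ℝ}

lemma subset_greedyStep (S : Finset (X × X)) (e : X × X) : S ⊆ greedyStep t S e := by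
  unfold greedyStep
  split
  · exact subset_rfl
  · exact Finset.subset_insert e S

lemma subset_foldl_greedyStep (l : List (X × X)) (S : Finset (X × X)) :
    S ⊆ l.foldl (greedyStep t) S := by
  induction l generalizing S with
  | nil => exact subset_rfl
  | cons e l ih => exact (subset_greedyStep S e).trans (ih _)

lemma spans_greedyStep (ht : 1 ≤ t) (S : Finset (X × X)) (e : X × X) :
    Spans t (greedyStep t S e) e.1 e.2 := by
  by_cases h : Spans t S e.1 e.2
  · exact h.mono (Finset.coe_subset.mpr (subset_greedyStep S e))
  · have hstep : greedyStep t S e = insert e S := if_neg h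
    exact spans_of_mem ht (by simp [hstep])

lemma spans_foldl_greedyStep (ht : 1 ≤ t) {l : List (X × X)} {e : X × X} (he : e ∈ l)
    (S : Finset (X × X)) : Spans t ↑(l.foldl (greedyStep t) S) e.1 e.2 := by
  induction l generalizing S with
  | nil => simp at he
  | cons f l ih =>
    rcases List.mem_cons.mp he with rfl | he
    · exact (spans_greedyStep ht S e).mono
        (Finset.coe_subset.mpr (subset_foldl_greedyStep l _))
    · exact ih he _

end Greedy

theorem naive_greedy_is_spanner_general {X : Type*} [MetricSpace X] {t : ℝ} (ht : 1 < t)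
    (V : Finset X) (l : List (X × X))
    (hcomp : ∀ P ∈ V, ∀ Q ∈ V, P ≠ Q → (P, Q) ∈ l ∨ (Q, P) ∈ l) :
    ∀ P ∈ V, ∀ Q ∈ V, ∃ p : List X,
      IsPathIn (↑(naiveGreedy t l)) p P Q ∧ chainLength p ≤ t * dist P Q := by
  intro P hP Q hQ
  show Spans t (naiveGreedy t l) P Q
  rcases eq_or_ne P Q with rfl | hPQ
  · exact spans_self t _ P
  rcases hcomp P hP Q hQ hPQ with hl | hl
  · exact spans_foldl_greedyStep ht.le hl ∅
  · exact (spans_foldl_greedyStep ht.le hl ∅).symm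

/-- The output of the naive greedy algorithm, run with parameter `t > 1` over all
pairs of distinct points of a finite set `V` in nondecreasing order of distance,
is a `t`-spanner of the complete graph on `V`: every pair `P, Q ∈ V` is joined in
it by a path of length at most `t · dist P Q`. -/
theorem naive_greedy_is_spanner {X : Type*} [MetricSpace X] {t : ℝ} (ht : 1 < t)
    (V : Finset X) (l : List (X × X))
    (hmem : ∀ e ∈ l, e.1 ∈ V ∧ e.2 ∈ V ∧ e.1 ≠ e.2)
    (hsort : List.Pairwise (fun a b => dist a.1 a.2 ≤ dist b.1 b.2) l)
    (hcomp : ∀ P ∈ V, ∀ Q ∈ V, P ≠ Q → (P, Q) ∈ l ∨ (Q, P) ∈ l) :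
    ∀ P ∈ V, ∀ Q ∈ V, ∃ p : List X,
      IsPathIn (↑(naiveGreedy t l)) p P Q ∧ chainLength p ≤ t * dist P Q :=
  naive_greedy_is_spanner_general ht V l hcomp

end
end

section
/- Let G be a connected weighted graph on a finite point set in a metric space, let N ⊆ V(G) be a subset of vertices, and let T be a minimum-weight Steiner tree in G connecting the required vertices N (possibly using other vertices of G as optional Steiner points). Then the weight of a minimum spanning tree of the complete metric graph on N is at most 2 times the weight of T. -/
open Classical

noncomputable section

/-- The total weight of a finite edge set, where each edge is weighted by the
metric distance between its endpoints. -/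
def edgeWeight {X : Type*} [PseudoMetricSpace X] (E : Finset (X × X)) : ℝ :=
  ∑ e ∈ E, dist e.1 e.2

/-- The edge set `E` connects every pair of points of `N`. -/
def ConnectsIn {X : Type*} (E : Set (X × X)) (N : Set X) : Prop :=
  ∀ u ∈ N, ∀ v ∈ N, ∃ p : List X, IsPathIn E p u v

/-- The weight of a minimum spanning tree of the complete metric graph on the
finite point set `N` (the infimum of the weights of connected spanning
subgraphs of the complete graph on `N`, which is attained by an MST). -/
def mstWeight {X : Type*} [PseudoMetricSpace X] (N : Finset X) : ℝ :=
  sInf { c | ∃ E : Finset (X × X), (∀ e ∈ E, e.1 ∈ N ∧ e.2 ∈ N) ∧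
    ConnectsIn (↑E : Set (X × X)) (↑N : Set X) ∧ c = edgeWeight E }

/-!
Doubling the edges of `T` and walking around gives a closed walk through every point of `N` of
length at most `2 * edgeWeight T`. It is built by induction on the edge set: remove an edge `ub`
at the start vertex `u`, split the remaining edges into the component of `u` and the rest, and
splice the tour at `b` of the rest into the tour at `u` of the component, entering and leaving
through `ub`. Deleting from this walk the points outside `N` does not lengthen it, by the triangle
inequality, and the consecutive pairs of the shortened walk form a connected graph on `N` whose
weight bounds the weight of a minimum spanning tree.
-/

section

open Relation

variable {X : Type*}

abbrev edgeAdj (E : Set (X × X)) : X → X → Prop := SymmGen fun a b => (a, b) ∈ E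

theorem exists_isPathIn_iff {E : Set (X × X)} {u v : X} :
    (∃ p, IsPathIn E p u v) ↔ ReflTransGen (edgeAdj E) u v := by
  constructor
  · rintro ⟨p, hne, hu, hv, hp⟩
    rw [List.head?_eq_some_head hne, Option.some_inj] at hu
    rw [List.getLast?_eq_some_getLast hne, Option.some_inj] at hv
    exact hu ▸ hv ▸ List.relationReflTransGen_of_exists_isChain p hp hne
  · intro h
    obtain ⟨p, hne, hp, hu, hv⟩ := List.exists_isChain_ne_nil_of_relationReflTransGen h
    exact ⟨p, hne, by rw [List.head?_eq_some_head hne, hu],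
      by rw [List.getLast?_eq_some_getLast hne, hv], hp⟩

theorem connectsIn_iff {E : Set (X × X)} {N : Set X} :
    ConnectsIn E N ↔ ∀ u ∈ N, ∀ v ∈ N, ReflTransGen (edgeAdj E) u v := by
  simp only [ConnectsIn, exists_isPathIn_iff]

theorem reflTransGen_edgeAdj_erase {E : Finset (X × X)} (e : X × X) {x v : X}
    (h : ReflTransGen (edgeAdj ↑E) x v) :
    ReflTransGen (edgeAdj ↑(E.erase e)) x v ∨ ReflTransGen (edgeAdj ↑(E.erase e)) e.1 v ∨
      ReflTransGen (edgeAdj ↑(E.erase e)) e.2 v := by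
  induction h with
  | refl => exact Or.inl .refl
  | @tail y w _ hyw ih =>
    by_cases hyw' : edgeAdj ↑(E.erase e) y w
    · exact ih.imp (·.tail hyw') (Or.imp (·.tail hyw') (·.tail hyw'))
    · have hw : w = e.2 ∨ w = e.1 := by
        simp only [SymmGen, Finset.coe_erase, Set.mem_sdiff, Finset.mem_coe,
          Set.mem_singleton_iff, not_or, not_and, not_not] at hyw hyw'
        rcases hyw with h | h
        · exact Or.inl (by rw [← hyw'.1 h])
        · exact Or.inr (by rw [← hyw'.2 h])
      rcases hw with rfl | rfl
      · exact Or.inr (Or.inr .refl)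
      · exact Or.inr (Or.inl .refl)

theorem reflTransGen_edgeAdj_filter {E : Finset (X × X)} {Q : X → Prop} [DecidablePred Q]
    (hQ : ∀ x y, edgeAdj ↑E x y → Q x → Q y) {x v : X} (hx : Q x)
    (h : ReflTransGen (edgeAdj ↑E) x v) :
    ReflTransGen (edgeAdj ↑(E.filter fun f => Q f.1)) x v := by
  suffices Q v ∧ ReflTransGen (edgeAdj ↑(E.filter fun f => Q f.1)) x v from this.2
  induction h with
  | refl => exact ⟨hx, .refl⟩
  | tail _ hyw ih =>
    obtain ⟨hy, hxy⟩ := ih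
    have hw := hQ _ _ hyw hy
    refine ⟨hw, hxy.tail ?_⟩
    rcases hyw with h | h
    · exact .of_rel (by simpa [hy] using h)
    · exact .of_rel_symm (by simpa [hw] using h)

def pathEdges : List X → Finset (X × X)
  | a :: b :: l => insert (a, b) (pathEdges (b :: l))
  | _ => ∅

theorem mem_of_mem_pathEdges : ∀ {l : List X} {e : X × X}, e ∈ pathEdges l → e.1 ∈ l ∧ e.2 ∈ l
  | a :: b :: l, e, he => by
    rcases Finset.mem_insert.1 he with rfl | he
    · simp
    · exact (mem_of_mem_pathEdges he).imp (List.mem_cons_of_mem a) (List.mem_cons_of_mem a)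

theorem isChain_edgeAdj_pathEdges : ∀ l : List X, l.IsChain (edgeAdj ↑(pathEdges l))
  | [] => .nil
  | [a] => .singleton a
  | a :: b :: l => by
    refine .cons_cons (.of_rel (by simp [pathEdges])) ((isChain_edgeAdj_pathEdges (b :: l)).imp ?_)
    exact fun _ _ h => h.imp (fun h => by simp [pathEdges, h]) (fun h => by simp [pathEdges, h])

theorem reflTransGen_edgeAdj_pathEdges {l : List X} {x y : X} (hx : x ∈ l) (hy : y ∈ l) :
    ReflTransGen (edgeAdj ↑(pathEdges l)) x y := by
  have hne : l ≠ [] := List.ne_nil_of_mem hx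
  have hhead := (isChain_edgeAdj_pathEdges l).induction
    (ReflTransGen (edgeAdj ↑(pathEdges l)) (l.head hne)) l (fun _ _ h h' => h'.tail h)
    (fun _ => .refl)
  exact (symm (hhead x hx)).trans (hhead y hy)

section Metric

variable [PseudoMetricSpace X]

theorem chainLength_append : ∀ {l₁ l₂ : List X} {a b : X}, l₁.getLast? = some a →
    l₂.head? = some b → chainLength (l₁ ++ l₂) = chainLength l₁ + dist a b + chainLength l₂
  | [x], b :: l, a, _, h₁, h₂ => by
    simp only [List.getLast?_singleton, Option.some_inj, List.head?_cons] at h₁ h₂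
    subst h₁ h₂
    simp [chainLength]
  | x :: y :: l₁, l₂, a, b, h₁, h₂ => by
    rw [List.getLast?_cons_cons] at h₁
    simp only [List.cons_append, chainLength]
    rw [← List.cons_append, chainLength_append h₁ h₂]
    ring

theorem chainLength_le_cons (a : X) : ∀ l : List X, chainLength l ≤ chainLength (a :: l)
  | [] => le_rfl
  | _ :: _ => le_add_of_nonneg_left dist_nonneg

theorem chainLength_cons_le_dist_add (x a : X) :
    ∀ l : List X, chainLength (x :: l) ≤ dist x a + chainLength (a :: l)
  | [] => by simp [chainLength]
  | b :: l => by
    simp only [chainLength]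
    linarith [dist_triangle x a b]

theorem chainLength_cons_le_of_sublist {l₁ l₂ : List X} (h : l₁.Sublist l₂) (x : X) :
    chainLength (x :: l₁) ≤ chainLength (x :: l₂) := by
  induction h generalizing x with
  | slnil => exact le_rfl
  | cons a _ ih => exact (ih x).trans (chainLength_cons_le_dist_add x a _)
  | cons_cons a _ ih =>
    simp only [chainLength]
    gcongr
    exact ih a

theorem List.Sublist.chainLength_le {l₁ l₂ : List X} (h : l₁.Sublist l₂) :
    chainLength l₁ ≤ chainLength l₂ := by
  induction h with
  | slnil => exact le_rfl
  | cons a _ ih => exact ih.trans (chainLength_le_cons a _)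
  | cons_cons a h _ => exact chainLength_cons_le_of_sublist h a

theorem edgeWeight_nonneg (E : Finset (X × X)) : 0 ≤ edgeWeight E :=
  Finset.sum_nonneg fun _ _ => dist_nonneg

theorem edgeWeight_insert_le (e : X × X) (E : Finset (X × X)) :
    edgeWeight (insert e E) ≤ dist e.1 e.2 + edgeWeight E := by
  by_cases he : e ∈ E
  · rw [Finset.insert_eq_of_mem he]
    exact le_add_of_nonneg_left dist_nonneg
  · rw [edgeWeight, Finset.sum_insert he, edgeWeight]

theorem mstWeight_le_edgeWeight {N : Finset X} {F : Finset (X × X)}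
    (hF : ∀ e ∈ F, e.1 ∈ N ∧ e.2 ∈ N) (hconn : ConnectsIn (↑F : Set (X × X)) (↑N : Set X)) :
    mstWeight N ≤ edgeWeight F :=
  csInf_le ⟨0, by rintro _ ⟨E, -, -, rfl⟩; exact edgeWeight_nonneg E⟩ ⟨F, hF, hconn, rfl⟩

theorem edgeWeight_pathEdges_le : ∀ l : List X, edgeWeight (pathEdges l) ≤ chainLength l
  | [] | [_] => by simp [pathEdges, edgeWeight, chainLength]
  | a :: b :: l => (edgeWeight_insert_le _ _).trans
      (add_le_add le_rfl (edgeWeight_pathEdges_le (b :: l)))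

structure IsDoublingTour (E : Finset (X × X)) (u : X) (p : List X) : Prop where
  head?_eq : p.head? = some u
  getLast?_eq : p.getLast? = some u
  mem_of_reflTransGen : ∀ v, ReflTransGen (edgeAdj ↑E) u v → v ∈ p
  chainLength_le : chainLength p ≤ 2 * edgeWeight E

theorem isDoublingTour_singleton {E : Finset (X × X)} {u : X} (hu : ∀ b, ¬edgeAdj ↑E u b) :
    IsDoublingTour E u [u] where
  head?_eq := rfl
  getLast?_eq := rfl
  mem_of_reflTransGen v huv := by
    rcases huv.cases_head with rfl | ⟨b, hub, -⟩
    · exact List.mem_singleton_self u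
    · exact absurd hub (hu b)
  chainLength_le := mul_nonneg zero_le_two (edgeWeight_nonneg E)

theorem IsDoublingTour.cons_append {E E₁ E₂ : Finset (X × X)} {u b : X} {p₁ p₂ : List X}
    (h₁ : IsDoublingTour E₁ u p₁) (h₂ : IsDoublingTour E₂ b p₂)
    (hcover : ∀ v, ReflTransGen (edgeAdj ↑E) u v →
      ReflTransGen (edgeAdj ↑E₁) u v ∨ ReflTransGen (edgeAdj ↑E₂) b v)
    (hweight : edgeWeight E₁ + edgeWeight E₂ + dist u b ≤ edgeWeight E) :
    IsDoublingTour E u (u :: p₂ ++ p₁) where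
  head?_eq := rfl
  getLast?_eq := by
    rw [List.getLast?_append, h₁.getLast?_eq]
    rfl
  mem_of_reflTransGen v hv := by
    rcases hcover v hv with h | h
    · simp [h₁.mem_of_reflTransGen v h]
    · simp [h₂.mem_of_reflTransGen v h]
  chainLength_le := by
    obtain ⟨r, rfl⟩ := List.head?_eq_some_iff.1 h₂.head?_eq
    have hlast : (u :: b :: r).getLast? = some b := by
      rw [List.getLast?_cons_cons, h₂.getLast?_eq]
    rw [chainLength_append hlast h₁.head?_eq, chainLength, dist_comm b u]
    linarith [h₁.chainLength_le, h₂.chainLength_le]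

theorem exists_isDoublingTour_of_cover {E E' : Finset (X × X)} {u b : X}
    (ih : ∀ F ⊆ E', ∀ w, ∃ p, IsDoublingTour F w p)
    (hweight : edgeWeight E' + dist u b ≤ edgeWeight E)
    (hcover : ∀ v, ReflTransGen (edgeAdj ↑E) u v →
      ReflTransGen (edgeAdj ↑E') u v ∨ ReflTransGen (edgeAdj ↑E') b v) :
    ∃ p, IsDoublingTour E u p := by
  set Q : X → Prop := ReflTransGen (edgeAdj ↑E') u
  have hQ : ∀ x y, edgeAdj ↑E' x y → Q x → Q y := fun _ _ hxy hx => hx.tail hxy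
  have hnQ : ∀ x y, edgeAdj ↑E' x y → ¬Q x → ¬Q y := fun _ _ hxy hx hy => hx (hy.tail (symm hxy))
  obtain ⟨p₁, h₁⟩ := ih (E'.filter fun f => Q f.1) (Finset.filter_subset _ _) u
  obtain ⟨p₂, h₂⟩ := ih (E'.filter fun f => ¬Q f.1) (Finset.filter_subset _ _) b
  refine ⟨_, h₁.cons_append h₂ (fun v hv => ?_) ?_⟩
  · rcases hcover v hv with huv | hbv
    · exact Or.inl (reflTransGen_edgeAdj_filter hQ .refl huv)
    · by_cases hub : Q b
      · exact Or.inl (reflTransGen_edgeAdj_filter hQ .refl (hub.trans hbv))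
      · exact Or.inr (reflTransGen_edgeAdj_filter hnQ hub hbv)
  · rwa [edgeWeight, edgeWeight, Finset.sum_filter_add_sum_filter_not]

theorem exists_isDoublingTour (E : Finset (X × X)) (u : X) : ∃ p, IsDoublingTour E u p := by
  induction E using Finset.strongInduction generalizing u with
  | H E ih =>
  by_cases hu : ∃ e ∈ E, ∃ b, e = (u, b) ∨ e = (b, u)
  · obtain ⟨e, he, b, heub⟩ := hu
    have hweight : edgeWeight (E.erase e) + dist u b = edgeWeight E := by
      rw [edgeWeight, edgeWeight, ← Finset.sum_erase_add E _ he]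
      rcases heub with rfl | rfl
      · rfl
      · rw [dist_comm]
    refine exists_isDoublingTour_of_cover
      (fun F hF => ih F (Finset.ssubset_of_subset_of_ssubset hF (Finset.erase_ssubset he)))
      hweight.le fun v hv => ?_
    rcases heub with rfl | rfl
    · simpa only [or_self_left] using reflTransGen_edgeAdj_erase (u, b) hv
    · simpa only [or_comm, or_self_left] using reflTransGen_edgeAdj_erase (b, u) hv
  · push Not at hu
    refine ⟨[u], isDoublingTour_singleton fun b hub => ?_⟩
    rcases hub with h | h
    · exact (hu _ h b).1 rfl
    · exact (hu _ h b).2 rfl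

end Metric

end

theorem mst_le_two_steiner_general {X : Type*} [MetricSpace X]
    (N : Finset X)
    (T : Finset (X × X))
    (hTconn : ConnectsIn (↑T : Set (X × X)) (↑N : Set X)) :
    mstWeight N ≤ 2 * edgeWeight T := by
  rcases N.eq_empty_or_nonempty with rfl | ⟨u, hu⟩
  · calc mstWeight ∅ ≤ edgeWeight (∅ : Finset (X × X)) :=
          mstWeight_le_edgeWeight (by simp) (by simp [ConnectsIn])
      _ ≤ 2 * edgeWeight T := by
          simpa [edgeWeight] using mul_nonneg zero_le_two (edgeWeight_nonneg T)
  obtain ⟨p, -, -, hcover, hlen⟩ := exists_isDoublingTour T u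
  set q := p.filter (· ∈ N)
  have hqN : ∀ x ∈ q, x ∈ N := fun x hx => by simpa using (List.mem_filter.1 hx).2
  have hNq : ∀ v ∈ N, v ∈ q := fun v hv =>
    List.mem_filter.2 ⟨hcover v (connectsIn_iff.1 hTconn u hu v hv), by simpa using hv⟩
  calc mstWeight N ≤ edgeWeight (pathEdges q) :=
        mstWeight_le_edgeWeight (fun e he => (mem_of_mem_pathEdges he).imp (hqN _) (hqN _))
          (connectsIn_iff.2 fun x hx y hy => reflTransGen_edgeAdj_pathEdges (hNq x hx) (hNq y hy))
    _ ≤ chainLength q := edgeWeight_pathEdges_le q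
    _ ≤ chainLength p := List.filter_sublist.chainLength_le
    _ ≤ 2 * edgeWeight T := hlen

/-- **Steiner tree versus MST.** Let `G` be a connected weighted graph on a finite
point set `V` in a metric space (edge weights equal to distances), `N ⊆ V`, and
let `T` be a minimum-weight Steiner tree in `G` connecting the required vertices
`N` (possibly using other vertices of `G` as optional Steiner points). Then the
weight of a minimum spanning tree of the complete metric graph on `N` is at most
twice the weight of `T`. -/
theorem mst_le_two_steiner {X : Type*} [MetricSpace X]
    (V : Finset X) (Eg : Finset (X × X))
    (hEg : ∀ e ∈ Eg, e.1 ∈ V ∧ e.2 ∈ V)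
    (hconn : ConnectsIn (↑Eg : Set (X × X)) (↑V : Set X))
    (N : Finset X) (hN : N ⊆ V)
    (T : Finset (X × X)) (hTsub : T ⊆ Eg)
    (hTconn : ConnectsIn (↑T : Set (X × X)) (↑N : Set X))
    (hTmin : ∀ T' ⊆ Eg, ConnectsIn (↑T' : Set (X × X)) (↑N : Set X) → edgeWeight T ≤ edgeWeight T') :
    mstWeight N ≤ 2 * edgeWeight T :=
  mst_le_two_steiner_general N T hTconn

end
end

section
/- Suppose ε' = ε/36 with 0 < ε ≤ 1, and suppose points x, y, x', y', u, v in a metric space satisfy: ‖xy‖ > 1/(1+ε'), ‖ux‖ ≤ ε', ‖vy‖ ≤ ε', ‖ux'‖ ≤ 2ε', ‖vy'‖ ≤ 2ε'. Suppose further there are paths P_{xx'} of length at most (1+ε')‖xx'‖ between x and x' and P_{yy'} of length at most (1+ε')‖yy'‖ between y and y'. Then the path P = P_{xx'} · x'y' · P_{y'y} has length at most (1+ε)‖xy‖. -/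
/-! The triangle inequality through `u` and `v` gives `‖xx'‖, ‖yy'‖ ≤ 3ε'` and
`‖x'y'‖ ≤ ‖xy‖ + 6ε'`, so `P` exceeds `‖xy‖` by at most `6ε'(2 + ε') ≤ ε/(1 + ε')`,
which is less than `ε‖xy‖` because `‖xy‖ > 1/(1 + ε')`. -/

noncomputable section

theorem chainLength_append_s7 {X : Type*} [PseudoMetricSpace X] {l m : List X} {a b : X}
    (ha : l.getLast? = some a) (hb : m.head? = some b) :
    chainLength (l ++ m) = chainLength l + dist a b + chainLength m := by
  obtain ⟨m, rfl⟩ := List.head?_eq_some_iff.mp hb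
  induction l with
  | nil => simp at ha
  | cons c l ih =>
    cases l with
    | nil =>
      simp only [List.getLast?_singleton, Option.some_inj] at ha
      simp [chainLength, ha]
    | cons d r =>
      rw [List.getLast?_cons_cons] at ha
      simp only [List.cons_append, chainLength] at ih ⊢
      rw [ih ha]
      ring

theorem mul_two_add_le_div_one_add {δ : ℝ} (hδ0 : 0 ≤ δ) (hδ1 : δ ≤ 1) :
    6 * δ * (2 + δ) ≤ 36 * δ / (1 + δ) := by
  rw [le_div_iff₀ (by linarith)]
  nlinarith [mul_nonneg hδ0 hδ0]

theorem replacement_stretch_general {X : Type*} [MetricSpace X]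
    {ε ε' : ℝ} (hε0 : 0 < ε) (hε1 : ε ≤ 1) (hε' : ε' = ε / 36)
    (x y x' y' u v : X)
    (hxy : 1 / (1 + ε') < dist x y)
    (hux : dist u x ≤ ε') (hvy : dist v y ≤ ε')
    (hux' : dist u x' ≤ 2 * ε') (hvy' : dist v y' ≤ 2 * ε')
    (p₁ p₂ : List X)
    (hp₁l : p₁.getLast? = some x')
    (hp₁len : chainLength p₁ ≤ (1 + ε') * dist x x')
    (hp₂h : p₂.head? = some y')
    (hp₂len : chainLength p₂ ≤ (1 + ε') * dist y y') :
    chainLength (p₁ ++ p₂) ≤ (1 + ε) * dist x y := by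
  have hε'0 : 0 ≤ ε' := by rw [hε']; positivity
  have hxx' : dist x x' ≤ 3 * ε' := by linarith [dist_triangle_left x x' u]
  have hyy' : dist y y' ≤ 3 * ε' := by linarith [dist_triangle_left y y' v]
  have hx'y' : dist x' y' ≤ dist x y + 6 * ε' := by
    linarith [dist_triangle4 x' x y y', dist_comm x x']
  have hslack : 6 * ε' * (2 + ε') ≤ ε / (1 + ε') :=
    calc 6 * ε' * (2 + ε') ≤ 36 * ε' / (1 + ε') :=
          mul_two_add_le_div_one_add hε'0 (by rw [hε']; linarith)
      _ = ε / (1 + ε') := by rw [hε']; ring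
  calc chainLength (p₁ ++ p₂) = chainLength p₁ + dist x' y' + chainLength p₂ :=
        chainLength_append_s7 hp₁l hp₂h
    _ ≤ (1 + ε') * (3 * ε') + (dist x y + 6 * ε') + (1 + ε') * (3 * ε') := by
        gcongr
        · exact hp₁len.trans (by gcongr)
        · exact hp₂len.trans (by gcongr)
    _ = dist x y + 6 * ε' * (2 + ε') := by ring
    _ ≤ dist x y + ε * (1 / (1 + ε')) := by rw [mul_one_div]; gcongr
    _ ≤ dist x y + ε * dist x y := by gcongr
    _ = (1 + ε) * dist x y := by ring

/-- **Key stretch inequality for the replacement step.** With `ε' = ε/36`,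
`0 < ε ≤ 1`, points satisfying `‖xy‖ > 1/(1+ε')`, `‖ux‖ ≤ ε'`, `‖vy‖ ≤ ε'`,
`‖ux'‖ ≤ 2ε'`, `‖vy'‖ ≤ 2ε'`, a path `p₁` from `x` to `x'` of length at most
`(1+ε')‖xx'‖` and a path `p₂` from `y'` to `y` of length at most `(1+ε')‖yy'‖`,
the concatenated path `P = p₁ · x'y' · p₂` has length at most `(1+ε)‖xy‖`. -/
theorem replacement_stretch {X : Type*} [MetricSpace X]
    {ε ε' : ℝ} (hε0 : 0 < ε) (hε1 : ε ≤ 1) (hε' : ε' = ε / 36)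
    (x y x' y' u v : X)
    (hxy : 1 / (1 + ε') < dist x y)
    (hux : dist u x ≤ ε') (hvy : dist v y ≤ ε')
    (hux' : dist u x' ≤ 2 * ε') (hvy' : dist v y' ≤ 2 * ε')
    (p₁ p₂ : List X)
    (hp₁ne : p₁ ≠ []) (hp₁h : p₁.head? = some x) (hp₁l : p₁.getLast? = some x')
    (hp₁len : chainLength p₁ ≤ (1 + ε') * dist x x')
    (hp₂ne : p₂ ≠ []) (hp₂h : p₂.head? = some y') (hp₂l : p₂.getLast? = some y)
    (hp₂len : chainLength p₂ ≤ (1 + ε') * dist y y') :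
    chainLength (p₁ ++ p₂) ≤ (1 + ε) * dist x y :=
  replacement_stretch_general hε0 hε1 hε' x y x' y' u v hxy hux hvy hux' hvy' p₁ p₂ hp₁l hp₁len hp₂h
    hp₂len
end
end

section
/- Let MN and PQ be two segments in the Euclidean plane, both edges of a greedy t-spanner, making angle at most θ with each other where θ < (t−1)/(2(t+1)), both crossing an arbitrary segment AB, and both of length at least (3t(t+1)/(t−1))·|AB|. If the projections of P and Q onto a baseline direction both lie between the projections of M and N, then t·|MP| + |PQ| + t·|QN| ≤ t·|MN|, contradicting the greedy construction; hence MN and PQ are endpoint-ordered (neither projection interval contains the other). -/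
open Classical RealInnerProductSpace

noncomputable section

/-- The two-dimensional Euclidean plane. -/
abbrev E2 := EuclideanSpace ℝ (Fin 2)


noncomputable section

/-! Measure along the unit direction `u` of `MN` and across it. Along `u` the detours
`|MP|` and `|QN|` together cover `|MN| - |PQ| cos α`, where `α ≤ θ` is the angle between the
edges, and they exceed this by at most the offsets of `P` and `Q` from the line `MN`. Both
edges meet `AB`, so these offsets sum to at most `2|AB| + |PQ| sin α`. Hence
`|MP| + |QN| ≤ |MN| + 2|AB| - |PQ| (1 - θ - θ²/2)`, and the length bound on `PQ` makes the
factor `t` on the detours leave room for the extra `|PQ|`. -/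

open InnerProductGeometry

section

variable {E F : Type*} [NormedAddCommGroup E] [NormedSpace ℝ E]
  [NormedAddCommGroup F] [NormedSpace ℝ F]

lemma dist_le_dist_of_mem_segment {A B X Y : E} (hX : X ∈ segment ℝ A B)
    (hY : Y ∈ segment ℝ A B) : dist X Y ≤ dist A B := by
  rw [← convexHull_pair] at hX hY
  have := Metric.dist_le_diam_of_mem (isBounded_convexHull.2 (Set.toFinite _).isBounded) hX hY
  rwa [convexHull_diam, Metric.diam_pair] at this

lemma norm_add_norm_le_of_mem_segment (f : E →ₗ[ℝ] F) (hf : ∀ v, ‖f v‖ ≤ ‖v‖)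
    {M N P Q X Y : E} (hMN : f (N - M) = 0) (hX : X ∈ segment ℝ M N) (hY : Y ∈ segment ℝ P Q) :
    ‖f (P - M)‖ + ‖f (Q - M)‖ ≤ 2 * dist X Y + ‖f (Q - P)‖ := by
  rw [segment_eq_image'] at hX hY
  obtain ⟨r, -, rfl⟩ := hX
  obtain ⟨s, ⟨hs0, hs1⟩, rfl⟩ := hY
  set Y := P + s • (Q - P)
  have hYX : ‖f (Y - M)‖ ≤ dist (M + r • (N - M)) Y := by
    rw [show Y - M = Y - (M + r • (N - M)) + r • (N - M) by abel, map_add, map_smul, hMN,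
      smul_zero, add_zero, dist_comm, dist_eq_norm]
    exact hf _
  have hP : f (P - M) = f (Y - M) - s • f (Q - P) := by
    rw [← map_smul, ← map_sub]; congr 1; simp only [Y]; module
  have hQ : f (Q - M) = f (Y - M) + (1 - s) • f (Q - P) := by
    rw [← map_smul, ← map_add]; congr 1; simp only [Y]; module
  rw [hP, hQ]
  calc _ ≤ (‖f (Y - M)‖ + s * ‖f (Q - P)‖) + (‖f (Y - M)‖ + (1 - s) * ‖f (Q - P)‖) := by
        gcongr
        · simpa [norm_smul, abs_of_nonneg hs0] using norm_sub_le _ (s • f (Q - P))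
        · simpa [norm_smul, abs_of_nonneg (sub_nonneg.2 hs1)] using
            norm_add_le _ ((1 - s) • f (Q - P))
    _ ≤ _ := by linarith

end

section

variable {E : Type*} [NormedAddCommGroup E] [InnerProductSpace ℝ E]

lemma starProjection_orthogonal_unit_singleton {u : E} (hu : ‖u‖ = 1) (w : E) :
    (ℝ ∙ u)ᗮ.starProjection w = w - ⟪u, w⟫ • u := by
  rw [Submodule.starProjection_orthogonal_val, Submodule.starProjection_unit_singleton ℝ hu]

lemma norm_le_abs_inner_add_norm_starProjection_orthogonal {u : E} (hu : ‖u‖ = 1) (w : E) :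
    ‖w‖ ≤ |⟪u, w⟫| + ‖(ℝ ∙ u)ᗮ.starProjection w‖ := by
  calc ‖w‖ = ‖⟪u, w⟫ • u + (ℝ ∙ u)ᗮ.starProjection w‖ := by
        rw [starProjection_orthogonal_unit_singleton hu, add_sub_cancel]
    _ ≤ |⟪u, w⟫| + ‖(ℝ ∙ u)ᗮ.starProjection w‖ := by
        simpa [norm_smul, hu] using norm_add_le (⟪u, w⟫ • u) ((ℝ ∙ u)ᗮ.starProjection w)

lemma norm_starProjection_orthogonal_unit_singleton {u : E} (hu : ‖u‖ = 1) (w : E) :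
    ‖(ℝ ∙ u)ᗮ.starProjection w‖ = ‖w‖ * Real.sin (angle u w) := by
  have hsq : ‖(ℝ ∙ u)ᗮ.starProjection w‖ ^ 2 = ‖w‖ ^ 2 - ⟪u, w⟫ ^ 2 := by
    have := Submodule.norm_sq_eq_add_norm_sq_starProjection w (ℝ ∙ u)
    rw [Submodule.starProjection_unit_singleton ℝ hu, norm_smul, hu, mul_one,
      Real.norm_eq_abs, sq_abs] at this
    linarith
  have hsin := sin_angle_mul_norm_mul_norm u w
  rw [real_inner_self_eq_norm_sq, real_inner_self_eq_norm_sq, hu, one_pow, one_mul, one_mul,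
    ← sq, ← hsq, Real.sqrt_sq (norm_nonneg _)] at hsin
  rw [← hsin, mul_comm]

lemma inner_unit_eq_norm_mul_cos_angle {u : E} (hu : ‖u‖ = 1) (w : E) :
    ⟪u, w⟫ = ‖w‖ * Real.cos (angle u w) := by
  rw [← cos_angle_mul_norm_mul_norm, hu]; ring

lemma dist_add_dist_le_of_inner_le {u M N P Q : E} (hu : ‖u‖ = 1) (hNM : N - M = dist M N • u)
    (hP : ⟪u, M⟫ ≤ ⟪u, P⟫) (hQ : ⟪u, Q⟫ ≤ ⟪u, N⟫) :
    dist M P + dist Q N ≤ dist M N - ⟪u, Q - P⟫ + ‖(ℝ ∙ u)ᗮ.starProjection (P - M)‖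
      + ‖(ℝ ∙ u)ᗮ.starProjection (Q - M)‖ := by
  have hMP := norm_le_abs_inner_add_norm_starProjection_orthogonal hu (P - M)
  have hQN := norm_le_abs_inner_add_norm_starProjection_orthogonal hu (N - Q)
  have hπN : (ℝ ∙ u)ᗮ.starProjection (N - Q) = -(ℝ ∙ u)ᗮ.starProjection (Q - M) := by
    rw [show N - Q = (N - M) - (Q - M) by abel, map_sub, hNM, map_smul,
      Submodule.starProjection_orthogonalComplement_singleton_eq_zero, smul_zero, zero_sub]
  have hN : ⟪u, N - M⟫ = dist M N := by
    rw [hNM, real_inner_smul_right, real_inner_self_eq_norm_sq, hu, one_pow, mul_one]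
  rw [hπN, norm_neg] at hQN
  simp only [inner_sub_right] at hMP hQN hN ⊢
  rw [abs_of_nonneg (by linarith)] at hMP hQN
  rw [dist_eq_norm', dist_eq_norm']
  linarith

theorem dist_add_dist_le_of_segments_cross {M N P Q X Y : E} (hMN : M ≠ N)
    (hP : ⟪M, N - M⟫ ≤ ⟪P, N - M⟫) (hQ : ⟪Q, N - M⟫ ≤ ⟪N, N - M⟫)
    (hX : X ∈ segment ℝ M N) (hY : Y ∈ segment ℝ P Q) :
    dist M P + dist Q N ≤ dist M N + 2 * dist X Y
      - dist P Q * (Real.cos (angle (N - M) (Q - P)) - Real.sin (angle (N - M) (Q - P))) := by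
  have hNM0 : 0 < ‖N - M‖ := norm_pos_iff.2 (sub_ne_zero.2 hMN.symm)
  set u := ‖N - M‖⁻¹ • (N - M)
  have hu : ‖u‖ = 1 := norm_smul_inv_norm (sub_ne_zero.2 hMN.symm)
  have hNM : N - M = dist M N • u := by
    rw [smul_smul, dist_eq_norm', mul_inv_cancel₀ hNM0.ne', one_smul]
  have hangle : angle u (Q - P) = angle (N - M) (Q - P) :=
    angle_smul_left_of_pos _ _ (inv_pos.2 hNM0)
  have hscale {x y : E} (h : ⟪x, N - M⟫ ≤ ⟪y, N - M⟫) : ⟪u, x⟫ ≤ ⟪u, y⟫ := by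
    simp only [u, real_inner_smul_left, real_inner_comm _ (N - M)]; gcongr
  have hproj := norm_add_norm_le_of_mem_segment (ℝ ∙ u)ᗮ.starProjection.toLinearMap
    (Submodule.norm_starProjection_apply_le _) (by
      rw [ContinuousLinearMap.coe_coe, hNM, map_smul,
        Submodule.starProjection_orthogonalComplement_singleton_eq_zero, smul_zero]) hX hY
  simp only [ContinuousLinearMap.coe_coe] at hproj
  have hmain := dist_add_dist_le_of_inner_le hu hNM (hscale hP) (hscale hQ)
  rw [norm_starProjection_orthogonal_unit_singleton hu (Q - P)] at hproj
  rw [inner_unit_eq_norm_mul_cos_angle hu] at hmain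
  rw [hangle, ← dist_eq_norm'] at hproj hmain
  linarith

end

lemma one_sub_sub_sq_div_two_le_cos_sub_sin {α θ : ℝ} (hα : 0 ≤ α) (hαθ : α ≤ θ) :
    1 - θ - θ ^ 2 / 2 ≤ Real.cos α - Real.sin α := by
  have hcos : 1 - θ ^ 2 / 2 ≤ Real.cos α := by
    have : α ^ 2 ≤ θ ^ 2 := pow_le_pow_left₀ hα hαθ 2
    linarith [Real.one_sub_sq_div_two_le_cos (x := α)]
  linarith [Real.sin_le hα]

lemma two_mul_mul_add_le_of_lt_div_of_div_mul_le {t θ d ℓ : ℝ} (ht : 1 < t) (hθ0 : 0 ≤ θ)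
    (hθ : θ < (t - 1) / (2 * (t + 1))) (hd : 0 ≤ d) (hℓ : 3 * t * (t + 1) / (t - 1) * d ≤ ℓ) :
    2 * t * d + ℓ ≤ t * ℓ * (1 - θ - θ ^ 2 / 2) := by
  rw [lt_div_iff₀ (by linarith)] at hθ
  rw [div_mul_eq_mul_div, div_le_iff₀ (by linarith)] at hℓ
  have hℓ0 : 0 ≤ ℓ := nonneg_of_mul_nonneg_left
    ((mul_nonneg (by nlinarith) hd).trans hℓ) (by linarith)
  have key : 2 * (t - 1) + 3 * (t + 1) * (1 + t * θ + t * θ ^ 2 / 2) ≤ 3 * (t + 1) * t := by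
    nlinarith [mul_nonneg hθ0 (by linarith : 0 ≤ t - 1 - 2 * (t + 1) * θ),
      mul_nonneg (mul_nonneg hθ0 hθ0) (by linarith : 0 ≤ t - 1)]
  nlinarith [mul_le_mul_of_nonneg_left key hℓ0]

theorem long_parallel_edges_ordered_general {t θ : ℝ} (ht : 1 < t)
    (hθ : θ < (t - 1) / (2 * (t + 1)))
    (M N P Q A B : E2)
    (hangle : InnerProductGeometry.angle (N - M) (Q - P) ≤ θ)
    (hcross1 : ∃ z : E2, z ∈ segment ℝ M N ∧ z ∈ segment ℝ A B)
    (hcross2 : ∃ z : E2, z ∈ segment ℝ P Q ∧ z ∈ segment ℝ A B)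
    (hlenPQ : 3 * t * (t + 1) / (t - 1) * dist A B ≤ dist P Q)
    (hprojP : ⟪P, N - M⟫ ∈ Set.uIcc (⟪M, N - M⟫ : ℝ) ⟪N, N - M⟫)
    (hprojQ : ⟪Q, N - M⟫ ∈ Set.uIcc (⟪M, N - M⟫ : ℝ) ⟪N, N - M⟫) :
    t * dist M P + dist P Q + t * dist Q N ≤ t * dist M N := by
  obtain ⟨X, hXMN, hXAB⟩ := hcross1
  obtain ⟨Y, hYPQ, hYAB⟩ := hcross2
  have hθ0 : 0 ≤ θ := (angle_nonneg _ _).trans hangle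
  have hMN : M ≠ N := by
    rintro rfl
    rw [sub_self, angle_zero_left] at hangle
    rw [lt_div_iff₀ (by linarith)] at hθ
    nlinarith [Real.pi_gt_three]
  have hMN_le : ⟪M, N - M⟫ ≤ ⟪N, N - M⟫ :=
    sub_nonneg.1 (by rw [← inner_sub_left]; exact real_inner_self_nonneg)
  rw [Set.uIcc_of_le hMN_le] at hprojP hprojQ
  have hgeom := dist_add_dist_le_of_segments_cross hMN hprojP.1 hprojQ.2 hXMN hYPQ
  have htrig := one_sub_sub_sq_div_two_le_cos_sub_sin (angle_nonneg _ _) hangle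
  have hXY := dist_le_dist_of_mem_segment hXAB hYAB
  have hbudget := two_mul_mul_add_le_of_lt_div_of_div_mul_le ht hθ0 hθ dist_nonneg hlenPQ
  have ht0 : 0 ≤ t := by linarith
  linarith [mul_le_mul_of_nonneg_left hgeom ht0, mul_le_mul_of_nonneg_left hXY ht0,
    mul_le_mul_of_nonneg_left htrig (mul_nonneg ht0 (dist_nonneg (x := P) (y := Q)))]

/-- **Ordering of almost-parallel long greedy edges crossing a segment.**
Let `MN` and `PQ` be two edges of a greedy `t`-spanner in the plane making angle
at most `θ < (t−1)/(2(t+1))` with each other, both crossing a segment `AB`, and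
both of length at least `(3t(t+1)/(t−1))·|AB|`. If the projections of `P` and
`Q` onto the baseline (the direction of `MN`) both lie between the projections
of `M` and `N`, then `t·|MP| + |PQ| + t·|QN| ≤ t·|MN|` — contradicting the
greedy construction; hence `MN` and `PQ` are endpoint-ordered. -/
theorem long_parallel_edges_ordered {t θ : ℝ} (ht : 1 < t)
    (hθ0 : 0 ≤ θ) (hθ : θ < (t - 1) / (2 * (t + 1)))
    (V : Finset E2) (l : List (E2 × E2))
    (hmem : ∀ e ∈ l, e.1 ∈ V ∧ e.2 ∈ V ∧ e.1 ≠ e.2)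
    (hsort : List.Pairwise (fun a b => dist a.1 a.2 ≤ dist b.1 b.2) l)
    (hcomp : ∀ P ∈ V, ∀ Q ∈ V, P ≠ Q → (P, Q) ∈ l ∨ (Q, P) ∈ l)
    (M N P Q A B : E2)
    (hMN : (M, N) ∈ naiveGreedy t l) (hPQ : (P, Q) ∈ naiveGreedy t l)
    (hne : (M, N) ≠ (P, Q))
    (hangle : InnerProductGeometry.angle (N - M) (Q - P) ≤ θ)
    (hcross1 : ∃ z : E2, z ∈ segment ℝ M N ∧ z ∈ segment ℝ A B)
    (hcross2 : ∃ z : E2, z ∈ segment ℝ P Q ∧ z ∈ segment ℝ A B)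
    (hlenMN : 3 * t * (t + 1) / (t - 1) * dist A B ≤ dist M N)
    (hlenPQ : 3 * t * (t + 1) / (t - 1) * dist A B ≤ dist P Q)
    (hprojP : ⟪P, N - M⟫ ∈ Set.uIcc (⟪M, N - M⟫ : ℝ) ⟪N, N - M⟫)
    (hprojQ : ⟪Q, N - M⟫ ∈ Set.uIcc (⟪M, N - M⟫ : ℝ) ⟪N, N - M⟫) :
    t * dist M P + dist P Q + t * dist Q N ≤ t * dist M N :=
  long_parallel_edges_ordered_general ht hθ M N P Q A B hangle hcross1 hcross2 hlenPQ hprojP hprojQ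

end
end
end
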